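/- arXiv:1906.11598 — 2 statements merged into one kernel-verified Lean document; each statement's English description precedes it below -/
import Mathlib

section
/- Let d ≥ 1 and let f satisfy the Shannon inequalities for C*_{d+1}, split into two copies of C*_d by the last cube coordinate. Then [[X_d, B_d, A_d]] + [[X'_d, B'_d, A'_d]] ≥ [[X_{d+1}, B_{d+1}, A_{d+1}]] + 2^d. -/
open Finset

/-- A finset of vertices is independent: it contains no edge of `G`. -/
def IsIndepSet {V : Type*} (G : SimpleGraph V) (A : Finset V) : Prop :=
  ∀ u ∈ A, ∀ v ∈ A, ¬ G.Adj u v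

/-- `f` satisfies the Shannon inequalities for `G`: (a) normalization and
positivity, (b) monotonicity, (c) submodularity, (d) strong monotonicity,
(e) strong submodularity. -/
structure ShannonIneqs {V : Type*} [DecidableEq V] (G : SimpleGraph V)
    (f : Finset V → ℝ) : Prop where
  empty : f ∅ = 0
  nonneg : ∀ A, 0 ≤ f A
  mono : ∀ A B, A ⊆ B → f A ≤ f B
  submod : ∀ A B, f (A ∩ B) + f (A ∪ B) ≤ f A + f B
  strongMono : ∀ A B, A ⊆ B → IsIndepSet G A → ¬ IsIndepSet G B → f A + 1 ≤ f B
  strongSubmod : ∀ A B, ¬ IsIndepSet G A → ¬ IsIndepSet G B → IsIndepSet G (A ∩ B) →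
    1 + f (A ∩ B) + f (A ∪ B) ≤ f A + f B

/-- Vertices of the `d`-dimensional hypercube. -/
abbrev Cube (d : ℕ) := Fin d → Bool

/-- Hamming weight of a cube vertex. -/
def wt {d : ℕ} (v : Cube d) : ℕ := (univ.filter fun i => v i = true).card

/-- Vertices of `C*_d`: cube vertices (`Sum.inl`) and pendant leaves
(`Sum.inr v = ℓ(v)`, the leaf attached to the cube vertex `v`). -/
abbrev VStar (d : ℕ) := Cube d ⊕ Cube d

/-- The graph `C*_d`: the `d`-dimensional hypercube (vertices of `{0,1}^d`,
edges between vectors differing in exactly one coordinate) together with a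
pendant leaf attached to every cube vertex. -/
def CStar (d : ℕ) : SimpleGraph (VStar d) where
  Adj x y :=
    match x, y with
    | .inl u, .inl v => hammingDist u v = 1
    | .inl u, .inr v => u = v
    | .inr u, .inl v => u = v
    | .inr _, .inr _ => False
  symm := by
    constructor
    rintro (u | u) (v | v) h
    · simpa [hammingDist_comm] using h
    · exact h.symm
    · exact h.symm
    · exact h
  loopless := by
    constructor
    rintro (u | u) h
    · simp at h
    · exact h

/-- `A_d`: the cube vertices of even Hamming weight. -/
def Aset (d : ℕ) : Finset (VStar d) :=
  (univ.filter fun v : Cube d => Even (wt v)).map ⟨Sum.inl, Sum.inl_injective⟩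

/-- `B_d`: the cube vertices of odd Hamming weight. -/
def Bset (d : ℕ) : Finset (VStar d) :=
  (univ.filter fun v : Cube d => ¬ Even (wt v)).map ⟨Sum.inl, Sum.inl_injective⟩

/-- `X_d = A_d ∪ ℓ(B_d)`. -/
def Xset (d : ℕ) : Finset (VStar d) :=
  Aset d ∪ (univ.filter fun v : Cube d => ¬ Even (wt v)).map ⟨Sum.inr, Sum.inr_injective⟩

/-- `[[X,B,A]] = Σ_{b∈B} f(X ∪ {b}) − Σ_{a∈A} f(X ∖ {a})`. -/
def brak {V : Type*} [DecidableEq V] (f : Finset V → ℝ) (X B A : Finset V) : ℝ :=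
  ∑ b ∈ B, f (insert b X) - ∑ a ∈ A, f (X.erase a)

/-- Flip the last coordinate of a cube vertex (the matching `M`). -/
def flipLast {d : ℕ} (v : Cube (d + 1)) : Cube (d + 1) :=
  Function.update v (Fin.last d) (!v (Fin.last d))

/-- `A_d` inside `C*_{d+1}`: even-weight cube vertices with last coordinate 0. -/
def A0 (d : ℕ) : Finset (VStar (d + 1)) :=
  (univ.filter fun v : Cube (d + 1) => Even (wt v) ∧ v (Fin.last d) = false).map
    ⟨Sum.inl, Sum.inl_injective⟩

/-- `B_d` inside `C*_{d+1}`: odd-weight cube vertices with last coordinate 0. -/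
def B0 (d : ℕ) : Finset (VStar (d + 1)) :=
  (univ.filter fun v : Cube (d + 1) => ¬ Even (wt v) ∧ v (Fin.last d) = false).map
    ⟨Sum.inl, Sum.inl_injective⟩

/-- `A'_d` inside `C*_{d+1}`: even-weight cube vertices with last coordinate 1. -/
def A1 (d : ℕ) : Finset (VStar (d + 1)) :=
  (univ.filter fun v : Cube (d + 1) => Even (wt v) ∧ v (Fin.last d) = true).map
    ⟨Sum.inl, Sum.inl_injective⟩

/-- `B'_d` inside `C*_{d+1}`: odd-weight cube vertices with last coordinate 1. -/
def B1 (d : ℕ) : Finset (VStar (d + 1)) :=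
  (univ.filter fun v : Cube (d + 1) => ¬ Even (wt v) ∧ v (Fin.last d) = true).map
    ⟨Sum.inl, Sum.inl_injective⟩

/-- `X_d = A_d ∪ ℓ(B_d)` inside `C*_{d+1}` (last coordinate 0 part). -/
def X0 (d : ℕ) : Finset (VStar (d + 1)) :=
  A0 d ∪ (univ.filter fun v : Cube (d + 1) => ¬ Even (wt v) ∧ v (Fin.last d) = false).map
    ⟨Sum.inr, Sum.inr_injective⟩

/-- `X'_d = A'_d ∪ ℓ(B'_d)` inside `C*_{d+1}` (last coordinate 1 part). -/
def X1 (d : ℕ) : Finset (VStar (d + 1)) :=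
  A1 d ∪ (univ.filter fun v : Cube (d + 1) => ¬ Even (wt v) ∧ v (Fin.last d) = true).map
    ⟨Sum.inr, Sum.inr_injective⟩



def flipAt {d : ℕ} (i : Fin d) (v : Fin d → Bool) : Fin d → Bool :=
  Function.update v i (!v i)

lemma flipAt_same {d : ℕ} (i : Fin d) (v : Fin d → Bool) : flipAt i v i = !v i :=
  Function.update_self _ _ _

lemma flipAt_ne {d : ℕ} {i j : Fin d} (h : j ≠ i) (v : Fin d → Bool) : flipAt i v j = v j :=
  Function.update_of_ne h _ _

lemma flipAt_flipAt {d : ℕ} (i : Fin d) (v : Fin d → Bool) : flipAt i (flipAt i v) = v := by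
  funext j
  by_cases h : j = i
  · subst h; rw [flipAt_same, flipAt_same, Bool.not_not]
  · rw [flipAt_ne h, flipAt_ne h]

lemma hammingDist_flipAt {d : ℕ} (i : Fin d) (v : Fin d → Bool) :
    hammingDist v (flipAt i v) = 1 := by
  show (univ.filter fun j => v j ≠ flipAt i v j).card = 1
  have : (univ.filter fun j => v j ≠ flipAt i v j) = {i} := by
    ext j
    simp only [mem_filter, mem_univ, true_and, mem_singleton]
    constructor
    · intro hj
      by_contra hne
      exact hj (flipAt_ne hne v).symm
    · intro hj
      subst hj
      rw [flipAt_same]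
      cases v j <;> simp
  rw [this, card_singleton]

lemma even_dist_add {d : ℕ} (u v : Fin d → Bool) :
    Even (hammingDist u v + (wt u + wt v)) := by
  show Even ((univ.filter fun i => u i ≠ v i).card + (_ + _))
  rw [wt, wt, Finset.card_filter, Finset.card_filter, Finset.card_filter,
    ← Finset.sum_add_distrib, ← Finset.sum_add_distrib]
  apply Finset.even_sum
  intro i _
  cases u i <;> cases v i <;> simp

lemma even_dist_iff {d : ℕ} (u v : Fin d → Bool) :
    Even (hammingDist u v) ↔ (Even (wt u) ↔ Even (wt v)) := by
  have h := even_dist_add u v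
  rw [Nat.even_add, Nat.even_add] at h
  tauto

lemma even_wt_flipAt {d : ℕ} (i : Fin d) (v : Fin d → Bool) :
    Even (wt (flipAt i v)) ↔ ¬ Even (wt v) := by
  have h := even_dist_iff v (flipAt i v)
  rw [hammingDist_flipAt] at h
  have h1 : ¬ Even 1 := by decide
  tauto

lemma eq_flipAt_of_dist_one {d : ℕ} {i : Fin d} {u v : Fin d → Bool}
    (h : hammingDist u v = 1) (hne : u i ≠ v i) : v = flipAt i u := by
  have h' : (univ.filter fun j => u j ≠ v j).card = 1 := h
  obtain ⟨j, hj⟩ := Finset.card_eq_one.mp h'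
  have hi : i ∈ univ.filter fun j => u j ≠ v j := by
    simp only [mem_filter, mem_univ, true_and]; exact hne
  rw [hj, mem_singleton] at hi
  subst hi
  funext k
  by_cases hk : k = i
  · subst hk
    rw [flipAt_same]
    revert hne; cases u k <;> cases v k <;> simp
  · rw [flipAt_ne hk]
    by_contra hvk
    have : k ∈ univ.filter fun j => u j ≠ v j := by
      simp only [mem_filter, mem_univ, true_and]
      exact fun h => hvk h.symm
    rw [hj, mem_singleton] at this
    exact hk this

lemma mem_Xset_inl {n : ℕ} (w : Cube n) : (Sum.inl w : VStar n) ∈ Xset n ↔ Even (wt w) := by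
  simp [Xset, Aset]

lemma mem_Xset_inr {n : ℕ} (w : Cube n) : (Sum.inr w : VStar n) ∈ Xset n ↔ ¬ Even (wt w) := by
  simp [Xset, Aset]

lemma mem_X0_inl {d : ℕ} (w : Cube (d+1)) :
    (Sum.inl w : VStar (d+1)) ∈ X0 d ↔ Even (wt w) ∧ w (Fin.last d) = false := by
  simp [X0, A0]

lemma mem_X0_inr {d : ℕ} (w : Cube (d+1)) :
    (Sum.inr w : VStar (d+1)) ∈ X0 d ↔ ¬ Even (wt w) ∧ w (Fin.last d) = false := by
  simp [X0, A0]

lemma mem_X1_inl {d : ℕ} (w : Cube (d+1)) :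
    (Sum.inl w : VStar (d+1)) ∈ X1 d ↔ Even (wt w) ∧ w (Fin.last d) = true := by
  simp [X1, A1]

lemma mem_X1_inr {d : ℕ} (w : Cube (d+1)) :
    (Sum.inr w : VStar (d+1)) ∈ X1 d ↔ ¬ Even (wt w) ∧ w (Fin.last d) = true := by
  simp [X1, A1]

lemma X0_subset {d : ℕ} : X0 d ⊆ Xset (d+1) := by
  intro x hx
  rcases x with w | w
  · rw [mem_X0_inl] at hx; rw [mem_Xset_inl]; exact hx.1
  · rw [mem_X0_inr] at hx; rw [mem_Xset_inr]; exact hx.1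

lemma X1_subset {d : ℕ} : X1 d ⊆ Xset (d+1) := by
  intro x hx
  rcases x with w | w
  · rw [mem_X1_inl] at hx; rw [mem_Xset_inl]; exact hx.1
  · rw [mem_X1_inr] at hx; rw [mem_Xset_inr]; exact hx.1

/-- The abstract three-submodularity step. -/
lemma key_abstract {V : Type*} [DecidableEq V] {G : SimpleGraph V} {f : Finset V → ℝ}
    (hf : ShannonIneqs G f) {X Y Z : Finset V} {a b : V}
    (hYX : Y ⊆ X) (hZX : Z ⊆ X) (haY : a ∈ Y) (haZ : a ∉ Z) (hbX : b ∉ X)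
    (hU : ¬ IsIndepSet G (insert b (X.erase a)))
    (hW : ¬ IsIndepSet G (insert b Y))
    (hI : IsIndepSet G (insert b (Y.erase a))) :
    f (insert b X) + f (Y.erase a) + f Z + 1 ≤ f (X.erase a) + f (insert b Z) + f Y := by
  have hYX' : ∀ x, x ∈ Y → x ∈ X := fun x h => hYX h
  have hZX' : ∀ x, x ∈ Z → x ∈ X := fun x h => hZX h
  have e1 : insert b (X.erase a) ∩ insert b Y = insert b (Y.erase a) := by
    ext x
    have h1 := hYX' x
    simp only [mem_inter, mem_insert, mem_erase, ne_eq]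
    tauto
  have e2 : insert b (X.erase a) ∪ insert b Y = insert b X := by
    ext x
    have h1 := hYX' x
    have h2 : x = a → x ∈ Y := fun h => h ▸ haY
    simp only [mem_union, mem_insert, mem_erase, ne_eq]
    by_cases hx : x = a <;> tauto
  have e3 : (X.erase a) ∩ insert b Z = Z := by
    ext x
    have h1 := hZX' x
    have h2 : x ∈ Z → x ≠ a := fun h he => haZ (he ▸ h)
    have h3 : x = b → x ∉ X := fun h => h ▸ hbX
    simp only [mem_inter, mem_insert, mem_erase, ne_eq]
    tauto
  have e4 : (X.erase a) ∪ insert b Z = insert b (X.erase a) := by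
    ext x
    have h1 := hZX' x
    have h2 : x ∈ Z → x ≠ a := fun h he => haZ (he ▸ h)
    simp only [mem_union, mem_insert, mem_erase, ne_eq]
    tauto
  have e5 : Y ∩ insert b (Y.erase a) = Y.erase a := by
    ext x
    have h1 : x = b → x ∉ Y := fun h hy => hbX (h ▸ hYX hy)
    simp only [mem_inter, mem_insert, mem_erase, ne_eq]
    tauto
  have e6 : Y ∪ insert b (Y.erase a) = insert b Y := by
    ext x
    simp only [mem_union, mem_insert, mem_erase, ne_eq]
    tauto
  have I1 := hf.strongSubmod (insert b (X.erase a)) (insert b Y) hU hW (by rw [e1]; exact hI)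
  rw [e1, e2] at I1
  have I2 := hf.submod (X.erase a) (insert b Z)
  rw [e3, e4] at I2
  have I3 := hf.submod Y (insert b (Y.erase a))
  rw [e5, e6] at I3
  linarith

lemma adj_inl_inl {n : ℕ} {u v : Cube n} :
    (CStar n).Adj (Sum.inl u) (Sum.inl v) ↔ hammingDist u v = 1 := Iff.rfl

lemma adj_inl_inr {n : ℕ} {u v : Cube n} :
    (CStar n).Adj (Sum.inl u) (Sum.inr v) ↔ u = v := Iff.rfl

lemma adj_inr_inl {n : ℕ} {u v : Cube n} :
    (CStar n).Adj (Sum.inr u) (Sum.inl v) ↔ u = v := Iff.rfl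

lemma adj_inr_inr {n : ℕ} {u v : Cube n} :
    (CStar n).Adj (Sum.inr u) (Sum.inr v) ↔ False := Iff.rfl

lemma flipLast_eq {d : ℕ} (v : Cube (d+1)) : flipLast v = flipAt (Fin.last d) v := rfl

lemma key0 {d : ℕ} {f : Finset (VStar (d+1)) → ℝ} (hf : ShannonIneqs (CStar (d+1)) f)
    {v : Cube (d+1)} (hv1 : ¬ Even (wt v)) (hv2 : v (Fin.last d) = false) :
    f (insert (Sum.inl v) (Xset (d+1))) + f ((X1 d).erase (Sum.inl (flipLast v))) + f (X0 d) + 1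
      ≤ f ((Xset (d+1)).erase (Sum.inl (flipLast v))) + f (insert (Sum.inl v) (X0 d))
        + f (X1 d) := by
  have hfe : Even (wt (flipLast v)) := by rw [flipLast_eq]; exact (even_wt_flipAt _ _).mpr hv1
  have hfl : flipLast v (Fin.last d) = true := by
    rw [flipLast_eq, flipAt_same, hv2]; rfl
  have haY : (Sum.inl (flipLast v) : VStar (d+1)) ∈ X1 d := (mem_X1_inl _).mpr ⟨hfe, hfl⟩
  have haZ : (Sum.inl (flipLast v) : VStar (d+1)) ∉ X0 d := by
    rw [mem_X0_inl]; rintro ⟨-, h⟩; rw [hfl] at h; cases h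
  have hbX : (Sum.inl v : VStar (d+1)) ∉ Xset (d+1) := by
    rw [mem_Xset_inl]; exact hv1
  have hU : ¬ IsIndepSet (CStar (d+1))
      (insert (Sum.inl v) ((Xset (d+1)).erase (Sum.inl (flipLast v)))) := by
    intro h
    refine h (Sum.inl v) (mem_insert_self _ _) (Sum.inr v) ?_ (adj_inl_inr.mpr rfl)
    exact mem_insert_of_mem (mem_erase.mpr ⟨by simp, (mem_Xset_inr v).mpr hv1⟩)
  have hW : ¬ IsIndepSet (CStar (d+1)) (insert (Sum.inl v) (X1 d)) := by
    intro h
    refine h (Sum.inl v) (mem_insert_self _ _) (Sum.inl (flipLast v)) (mem_insert_of_mem haY)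
      (adj_inl_inl.mpr ?_)
    rw [flipLast_eq]; exact hammingDist_flipAt _ _
  have hI : IsIndepSet (CStar (d+1))
      (insert (Sum.inl v) ((X1 d).erase (Sum.inl (flipLast v)))) := by
    intro x hx y hy hadj
    have hflip : ∀ {u u' : Cube (d+1)}, hammingDist u u' = 1 → u (Fin.last d) = false →
        u' (Fin.last d) = true → u' = flipLast u := by
      intro u u' h h0 h1
      rw [flipLast_eq]
      exact eq_flipAt_of_dist_one h (by rw [h0, h1]; simp)
    rcases x with w | w <;> rcases y with w' | w' <;>
      simp only [mem_insert, mem_erase, ne_eq, Sum.inl.injEq, reduceCtorEq, false_or,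
        mem_X1_inl, mem_X1_inr, not_false_eq_true, true_and] at hx hy
    · have hd : hammingDist w w' = 1 := hadj
      rcases hx with rfl | ⟨hxa, hxe, hxl⟩
      · rcases hy with rfl | ⟨hya, hye, hyl⟩
        · rw [hammingDist_self] at hd; cases hd
        · exact hya (hflip hd hv2 hyl)
      · rcases hy with rfl | ⟨hya, hye, hyl⟩
        · have hd' : hammingDist w' w = 1 := by rw [hammingDist_comm]; exact hd
          exact hxa (hflip hd' hv2 hxl)
        · have he := (even_dist_iff w w').mpr (iff_of_true hxe hye)
          rw [hd] at he
          exact (by decide : ¬ Even 1) he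
    · have hd : w = w' := hadj
      rcases hx with rfl | ⟨hxa, hxe, hxl⟩
      · rw [← hd, hv2] at hy; simp at hy
      · cases hd; exact hy.1 hxe
    · have hd : w = w' := hadj
      cases hd
      rcases hy with rfl | ⟨hya, hye, hyl⟩
      · rw [hv2] at hx; simp at hx
      · exact hx.1 hye
    · exact adj_inr_inr.mp hadj
  exact key_abstract hf X1_subset X0_subset haY haZ hbX hU hW hI

lemma key1 {d : ℕ} {f : Finset (VStar (d+1)) → ℝ} (hf : ShannonIneqs (CStar (d+1)) f)
    {v : Cube (d+1)} (hv1 : ¬ Even (wt v)) (hv2 : v (Fin.last d) = true) :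
    f (insert (Sum.inl v) (Xset (d+1))) + f ((X0 d).erase (Sum.inl (flipLast v))) + f (X1 d) + 1
      ≤ f ((Xset (d+1)).erase (Sum.inl (flipLast v))) + f (insert (Sum.inl v) (X1 d))
        + f (X0 d) := by
  have hfe : Even (wt (flipLast v)) := by rw [flipLast_eq]; exact (even_wt_flipAt _ _).mpr hv1
  have hfl : flipLast v (Fin.last d) = false := by
    rw [flipLast_eq, flipAt_same, hv2]; rfl
  have haY : (Sum.inl (flipLast v) : VStar (d+1)) ∈ X0 d := (mem_X0_inl _).mpr ⟨hfe, hfl⟩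
  have haZ : (Sum.inl (flipLast v) : VStar (d+1)) ∉ X1 d := by
    rw [mem_X1_inl]; rintro ⟨-, h⟩; rw [hfl] at h; cases h
  have hbX : (Sum.inl v : VStar (d+1)) ∉ Xset (d+1) := by
    rw [mem_Xset_inl]; exact hv1
  have hU : ¬ IsIndepSet (CStar (d+1))
      (insert (Sum.inl v) ((Xset (d+1)).erase (Sum.inl (flipLast v)))) := by
    intro h
    refine h (Sum.inl v) (mem_insert_self _ _) (Sum.inr v) ?_ (adj_inl_inr.mpr rfl)
    exact mem_insert_of_mem (mem_erase.mpr ⟨by simp, (mem_Xset_inr v).mpr hv1⟩)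
  have hW : ¬ IsIndepSet (CStar (d+1)) (insert (Sum.inl v) (X0 d)) := by
    intro h
    refine h (Sum.inl v) (mem_insert_self _ _) (Sum.inl (flipLast v)) (mem_insert_of_mem haY)
      (adj_inl_inl.mpr ?_)
    rw [flipLast_eq]; exact hammingDist_flipAt _ _
  have hI : IsIndepSet (CStar (d+1))
      (insert (Sum.inl v) ((X0 d).erase (Sum.inl (flipLast v)))) := by
    intro x hx y hy hadj
    have hflip : ∀ {u u' : Cube (d+1)}, hammingDist u u' = 1 → u (Fin.last d) = true →
        u' (Fin.last d) = false → u' = flipLast u := by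
      intro u u' h h0 h1
      rw [flipLast_eq]
      exact eq_flipAt_of_dist_one h (by rw [h0, h1]; simp)
    rcases x with w | w <;> rcases y with w' | w' <;>
      simp only [mem_insert, mem_erase, ne_eq, Sum.inl.injEq, reduceCtorEq, false_or,
        mem_X0_inl, mem_X0_inr, not_false_eq_true, true_and] at hx hy
    · have hd : hammingDist w w' = 1 := hadj
      rcases hx with rfl | ⟨hxa, hxe, hxl⟩
      · rcases hy with rfl | ⟨hya, hye, hyl⟩
        · rw [hammingDist_self] at hd; cases hd
        · exact hya (hflip hd hv2 hyl)
      · rcases hy with rfl | ⟨hya, hye, hyl⟩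
        · have hd' : hammingDist w' w = 1 := by rw [hammingDist_comm]; exact hd
          exact hxa (hflip hd' hv2 hxl)
        · have he := (even_dist_iff w w').mpr (iff_of_true hxe hye)
          rw [hd] at he
          exact (by decide : ¬ Even 1) he
    · have hd : w = w' := hadj
      rcases hx with rfl | ⟨hxa, hxe, hxl⟩
      · rw [← hd, hv2] at hy; simp at hy
      · cases hd; exact hy.1 hxe
    · have hd : w = w' := hadj
      cases hd
      rcases hy with rfl | ⟨hya, hye, hyl⟩
      · rw [hv2] at hx; simp at hx
      · exact hx.1 hye
    · exact adj_inr_inr.mp hadj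
  exact key_abstract hf X0_subset X1_subset haY haZ hbX hU hW hI

lemma flipLast_flipLast {d : ℕ} (v : Cube (d+1)) : flipLast (flipLast v) = v := by
  simp [flipLast_eq, flipAt_flipAt]

lemma not_even_wt_flipLast {d : ℕ} {v : Cube (d+1)} (h : Even (wt v)) :
    ¬ Even (wt (flipLast v)) := by
  rw [flipLast_eq]
  intro hE
  exact (even_wt_flipAt _ _).mp hE h

lemma even_wt_flipLast {d : ℕ} {v : Cube (d+1)} (h : ¬ Even (wt v)) :
    Even (wt (flipLast v)) := by
  rw [flipLast_eq]; exact (even_wt_flipAt _ _).mpr h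

lemma sum_split_last {d : ℕ} (p : Cube (d+1) → Prop) [DecidablePred p] (g : Cube (d+1) → ℝ) :
    ∑ v ∈ univ.filter (fun v => p v), g v
      = ∑ v ∈ univ.filter (fun v => p v ∧ v (Fin.last d) = false), g v
        + ∑ v ∈ univ.filter (fun v => p v ∧ v (Fin.last d) = true), g v := by
  rw [← Finset.sum_filter_add_sum_filter_not (univ.filter fun v => p v)
    (fun v => v (Fin.last d) = false) g]
  congr 1
  · rw [filter_filter]
  · rw [filter_filter]
    apply Finset.sum_congr _ (fun _ _ => rfl)
    apply filter_congr
    intro x _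
    simp [Bool.not_eq_false]

lemma sum_flip_et {d : ℕ} (g : Cube (d+1) → ℝ) :
    ∑ v ∈ univ.filter (fun v : Cube (d+1) => Even (wt v) ∧ v (Fin.last d) = true), g v
      = ∑ v ∈ univ.filter (fun v : Cube (d+1) => ¬ Even (wt v) ∧ v (Fin.last d) = false),
          g (flipLast v) := by
  refine (Finset.sum_nbij' (i := flipLast) (j := flipLast) ?_ ?_ ?_ ?_ (fun a _ => rfl)).symm
  · intro a ha
    rw [mem_filter] at ha ⊢
    refine ⟨mem_univ _, even_wt_flipLast ha.2.1, ?_⟩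
    rw [flipLast_eq, flipAt_same, ha.2.2]; rfl
  · intro a ha
    rw [mem_filter] at ha ⊢
    refine ⟨mem_univ _, not_even_wt_flipLast ha.2.1, ?_⟩
    rw [flipLast_eq, flipAt_same, ha.2.2]; rfl
  · intro a _; exact flipLast_flipLast a
  · intro a _; exact flipLast_flipLast a

lemma sum_flip_ef {d : ℕ} (g : Cube (d+1) → ℝ) :
    ∑ v ∈ univ.filter (fun v : Cube (d+1) => Even (wt v) ∧ v (Fin.last d) = false), g v
      = ∑ v ∈ univ.filter (fun v : Cube (d+1) => ¬ Even (wt v) ∧ v (Fin.last d) = true),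
          g (flipLast v) := by
  refine (Finset.sum_nbij' (i := flipLast) (j := flipLast) ?_ ?_ ?_ ?_ (fun a _ => rfl)).symm
  · intro a ha
    rw [mem_filter] at ha ⊢
    refine ⟨mem_univ _, even_wt_flipLast ha.2.1, ?_⟩
    rw [flipLast_eq, flipAt_same, ha.2.2]; rfl
  · intro a ha
    rw [mem_filter] at ha ⊢
    refine ⟨mem_univ _, not_even_wt_flipLast ha.2.1, ?_⟩
    rw [flipLast_eq, flipAt_same, ha.2.2]; rfl
  · intro a _; exact flipLast_flipLast a
  · intro a _; exact flipLast_flipLast a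

lemma card_s0_eq_s1 {d : ℕ} (hd : 1 ≤ d) :
    (univ.filter fun v : Cube (d+1) => ¬ Even (wt v) ∧ v (Fin.last d) = false).card
      = (univ.filter fun v : Cube (d+1) => ¬ Even (wt v) ∧ v (Fin.last d) = true).card := by
  have h0 : Fin.last d ≠ (0 : Fin (d+1)) := by
    intro h
    have := congrArg Fin.val h
    rw [Fin.val_last, Fin.val_zero] at this
    omega
  refine Finset.card_nbij' (i := fun v => flipAt 0 (flipLast v))
    (j := fun v => flipLast (flipAt 0 v)) ?_ ?_ ?_ ?_
  · intro a ha
    rw [mem_coe, mem_filter] at ha ⊢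
    dsimp only
    refine ⟨mem_univ _, ?_, ?_⟩
    · intro hE
      exact (even_wt_flipAt _ _).mp hE (even_wt_flipLast ha.2.1)
    · rw [flipAt_ne h0, flipLast_eq, flipAt_same, ha.2.2]; rfl
  · intro a ha
    rw [mem_coe, mem_filter] at ha ⊢
    dsimp only
    have he : Even (wt (flipAt 0 a)) := (even_wt_flipAt _ _).mpr ha.2.1
    refine ⟨mem_univ _, not_even_wt_flipLast he, ?_⟩
    rw [flipLast_eq, flipAt_same, flipAt_ne h0, ha.2.2]; rfl
  · intro a _
    dsimp only
    rw [flipAt_flipAt, flipLast_flipLast]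
  · intro a _
    dsimp only
    rw [flipLast_flipLast, flipAt_flipAt]

lemma card_s0_add_s1 {d : ℕ} :
    (univ.filter fun v : Cube (d+1) => ¬ Even (wt v) ∧ v (Fin.last d) = false).card
      + (univ.filter fun v : Cube (d+1) => ¬ Even (wt v) ∧ v (Fin.last d) = true).card
      = 2 ^ d := by
  have hsplit := Finset.card_filter_add_card_filter_not
    (s := univ.filter fun v : Cube (d+1) => ¬ Even (wt v))
    (p := fun v => v (Fin.last d) = false)
  rw [filter_filter, filter_filter] at hsplit
  have hcongr : (univ.filter fun v : Cube (d+1) => ¬ Even (wt v) ∧ ¬ v (Fin.last d) = false)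
      = univ.filter fun v : Cube (d+1) => ¬ Even (wt v) ∧ v (Fin.last d) = true := by
    apply filter_congr
    intro x _
    simp [Bool.not_eq_false]
  rw [hcongr] at hsplit
  have heq : (univ.filter fun v : Cube (d+1) => Even (wt v)).card
      = (univ.filter fun v : Cube (d+1) => ¬ Even (wt v)).card := by
    refine Finset.card_nbij' (i := flipLast) (j := flipLast) ?_ ?_ ?_ ?_
    · intro a ha
      rw [mem_coe, mem_filter] at ha ⊢
      exact ⟨mem_univ _, not_even_wt_flipLast ha.2⟩
    · intro a ha
      rw [mem_coe, mem_filter] at ha ⊢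
      exact ⟨mem_univ _, even_wt_flipLast ha.2⟩
    · intro a _; exact flipLast_flipLast a
    · intro a _; exact flipLast_flipLast a
  have htot := Finset.card_filter_add_card_filter_not
    (s := (univ : Finset (Cube (d+1)))) (p := fun v => Even (wt v))
  have hu : (univ : Finset (Cube (d+1))).card = 2 ^ (d+1) := by
    rw [Finset.card_univ]
    simp
  rw [heq, hu, ← two_mul] at htot
  have h3 : (univ.filter fun v : Cube (d+1) => ¬ Even (wt v)).card = 2 ^ d := by
    apply Nat.eq_of_mul_eq_mul_left (show 0 < 2 by norm_num)
    rw [htot, pow_succ, mul_comm]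
  rw [hsplit, h3]

/-- Inequality (11) of the paper: for `C*_{d+1}` split into two copies of `C*_d`
by the last cube coordinate,
`[[X_d,B_d,A_d]] + [[X'_d,B'_d,A'_d]] ≥ [[X_{d+1},B_{d+1},A_{d+1}]] + 2^d`. -/
theorem brak_recursion (d : ℕ) (hd : 1 ≤ d) (f : Finset (VStar (d + 1)) → ℝ)
    (hf : ShannonIneqs (CStar (d + 1)) f) :
    brak f (Xset (d + 1)) (Bset (d + 1)) (Aset (d + 1)) + 2 ^ d ≤
      brak f (X0 d) (B0 d) (A0 d) + brak f (X1 d) (B1 d) (A1 d) := by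
  have hBs := sum_split_last (d := d) (fun v => ¬ Even (wt v))
  have hAs := sum_split_last (d := d) (fun v => Even (wt v))
  simp only [brak, Bset, Aset, B0, B1, A0, A1, Finset.sum_map, Function.Embedding.coeFn_mk]
  rw [hBs (fun v => f (insert (Sum.inl v) (Xset (d + 1)))),
      hAs (fun v => f ((Xset (d + 1)).erase (Sum.inl v))),
      sum_flip_ef (fun v => f ((Xset (d + 1)).erase (Sum.inl v))),
      sum_flip_et (fun v => f ((Xset (d + 1)).erase (Sum.inl v))),
      sum_flip_ef (fun v => f ((X0 d).erase (Sum.inl v))),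
      sum_flip_et (fun v => f ((X1 d).erase (Sum.inl v)))]
  have H0 : ∀ v ∈ univ.filter (fun v : Cube (d+1) => ¬ Even (wt v) ∧ v (Fin.last d) = false),
      f (insert (Sum.inl v) (Xset (d+1))) + f ((X1 d).erase (Sum.inl (flipLast v)))
          + f (X0 d) + 1
        ≤ f ((Xset (d+1)).erase (Sum.inl (flipLast v))) + f (insert (Sum.inl v) (X0 d))
          + f (X1 d) := by
    intro v hv
    rw [mem_filter] at hv
    exact key0 hf hv.2.1 hv.2.2
  have H1 : ∀ v ∈ univ.filter (fun v : Cube (d+1) => ¬ Even (wt v) ∧ v (Fin.last d) = true),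
      f (insert (Sum.inl v) (Xset (d+1))) + f ((X0 d).erase (Sum.inl (flipLast v)))
          + f (X1 d) + 1
        ≤ f ((Xset (d+1)).erase (Sum.inl (flipLast v))) + f (insert (Sum.inl v) (X1 d))
          + f (X0 d) := by
    intro v hv
    rw [mem_filter] at hv
    exact key1 hf hv.2.1 hv.2.2
  have E0 := Finset.sum_le_sum H0
  have E1 := Finset.sum_le_sum H1
  simp only [Finset.sum_add_distrib, Finset.sum_const, nsmul_eq_mul, mul_one] at E0 E1
  rw [card_s0_eq_s1 hd] at E0
  have hc2 : (((univ.filter fun v : Cube (d+1) => ¬ Even (wt v) ∧ v (Fin.last d) = true).card : ℝ))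
      + ((univ.filter fun v : Cube (d+1) => ¬ Even (wt v) ∧ v (Fin.last d) = true).card : ℝ)
      = 2 ^ d := by
    have h := card_s0_add_s1 (d := d)
    rw [card_s0_eq_s1 hd] at h
    exact_mod_cast h
  linarith
end

section
/- Let d ≥ 1 and let D_d be any graph in the family Δ_d. The subgraph of D_d induced on the vertex set C^(1) ∪ B^(2) ∪ A^(3) is isomorphic to C*_d: C^(1) is a d-dimensional cube, B^(2) ∪ A^(3) is an independent set, and the two matchings restricted to these sets form a perfect matching between C^(1) and B^(2) ∪ A^(3). -/
open Finset

/-- Vertices of a graph in the family `Δ_d`: three copies of the `d`-cube. -/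
abbrev VDelta (d : ℕ) := Fin 3 × Cube d

/-- A member `D_d` of the family `Δ_d`: three disjoint copies of the `d`-cube
and, for each `i`, a perfect matching between the even-weight part `A^(i)` of
copy `i` and the odd-weight part `B^(i+1)` of copy `i+1` (indices mod 3).
The matchings are encoded by bijections `σ i` of the cube that map even-weight
vertices to odd-weight ones (hypothesis `hσ` in the theorems). -/
def DeltaGraph (d : ℕ) (σ : Fin 3 → Cube d ≃ Cube d) : SimpleGraph (VDelta d) where
  Adj x y :=
    (x.1 = y.1 ∧ hammingDist x.2 y.2 = 1) ∨
    (y.1 = x.1 + 1 ∧ Even (wt x.2) ∧ σ x.1 x.2 = y.2) ∨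
    (x.1 = y.1 + 1 ∧ Even (wt y.2) ∧ σ y.1 y.2 = x.2)
  symm := by
    constructor
    rintro ⟨i, u⟩ ⟨j, v⟩ (⟨h1, h2⟩ | h | h)
    · exact Or.inl ⟨h1.symm, by simpa [hammingDist_comm] using h2⟩
    · exact Or.inr (Or.inr h)
    · exact Or.inr (Or.inl h)
  loopless := by
    constructor
    rintro ⟨i, u⟩ (⟨-, h⟩ | ⟨h, -⟩ | ⟨h, -⟩)
    · simp at h
    · have : ∀ k : Fin 3, k ≠ k + 1 := by decide
      exact absurd h (this i)
    · have : ∀ k : Fin 3, k ≠ k + 1 := by decide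
      exact absurd h (this i)

lemma wt_cast {d : ℕ} (v : Cube d) :
    ((wt v : ℕ) : ZMod 2) = ∑ i, (if v i = true then (1 : ZMod 2) else 0) := by
  rw [wt, Finset.card_filter]
  push_cast
  simp

lemma ham_cast {d : ℕ} (u v : Cube d) :
    ((hammingDist u v : ℕ) : ZMod 2) = (wt u : ZMod 2) + (wt v : ZMod 2) := by
  rw [hammingDist, Finset.card_filter, wt_cast, wt_cast, ← Finset.sum_add_distrib]
  push_cast
  apply Finset.sum_congr rfl
  intro i _
  cases hu : u i <;> cases hv : v i <;> simp [hu, hv] <;> decide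

lemma parity_flip {d : ℕ} {u v : Cube d} (h : hammingDist u v = 1) :
    Even (wt u) ↔ ¬ Even (wt v) := by
  have hc := ham_cast u v
  rw [h] at hc
  rw [← ZMod.natCast_eq_zero_iff_even, ← ZMod.natCast_eq_zero_iff_even]
  have h2 : ∀ a b : ZMod 2, (1 : ZMod 2) = a + b → (a = 0 ↔ ¬ b = 0) := by decide
  exact h2 _ _ hc

lemma ham_update {d : ℕ} (v : Cube d) (i : Fin d) :
    hammingDist v (Function.update v i (!v i)) = 1 := by
  rw [hammingDist]
  rw [show ({j | v j ≠ Function.update v i (!v i) j} : Finset (Fin d)) = {i} from ?_]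
  · exact Finset.card_singleton i
  · ext j
    by_cases hj : j = i
    · subst hj; simp
    · simp [Function.update_apply, hj]

lemma symm_even {d : ℕ} (hd : 1 ≤ d) (e : Cube d ≃ Cube d)
    (he : ∀ v, Even (wt v) → ¬ Even (wt (e v))) {w : Cube d} (hw : ¬ Even (wt w)) :
    Even (wt (e.symm w)) := by
  classical
  set S : Finset (Cube d) := univ.filter fun v => Even (wt v) with hS
  set T : Finset (Cube d) := univ.filter fun v => ¬ Even (wt v) with hT
  have hsub : S.image (fun v => e v) ⊆ T := by
    intro x hx
    simp only [hS, hT, Finset.mem_image, Finset.mem_filter, Finset.mem_univ, true_and] at hx ⊢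
    obtain ⟨v, hv, rfl⟩ := hx
    exact he v hv
  have hTS : T.card ≤ S.card := by
    apply Finset.card_le_card_of_injOn (fun v => Function.update v ⟨0, hd⟩ (!v ⟨0, hd⟩))
    · intro v hv
      simp only [hS, hT, Finset.mem_coe, Finset.mem_filter, Finset.mem_univ, true_and] at hv ⊢
      have := parity_flip (ham_update v ⟨0, hd⟩)
      tauto
    · intro a _ b _ hab
      funext j
      by_cases hj : j = ⟨0, hd⟩
      · have := congrFun hab ⟨0, hd⟩
        subst hj
        simpa using this
      · have := congrFun hab j
        simpa [Function.update_apply, hj] using this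
  have heq : S.image (fun v => e v) = T := by
    apply Finset.eq_of_subset_of_card_le hsub
    rwa [Finset.card_image_of_injective _ e.injective]
  have hwT : w ∈ T := by simp only [hT, Finset.mem_filter, Finset.mem_univ, true_and]; exact hw
  rw [← heq] at hwT
  simp only [Finset.mem_image, hS, Finset.mem_filter, Finset.mem_univ, true_and] at hwT
  obtain ⟨v, hv, rfl⟩ := hwT
  simpa using hv

/-- Forward map of the isomorphism. -/
def fwd {d : ℕ} (σ : Fin 3 → Cube d ≃ Cube d) (x : VDelta d) : VStar d :=
  if x.1 = 0 then .inl x.2 else if x.1 = 1 then .inr ((σ 0).symm x.2) else .inr (σ 2 x.2)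

lemma fwd0 {d : ℕ} (σ : Fin 3 → Cube d ≃ Cube d) (v : Cube d) :
    fwd σ (0, v) = .inl v := by simp [fwd]

lemma fwd1 {d : ℕ} (σ : Fin 3 → Cube d ≃ Cube d) (v : Cube d) :
    fwd σ (1, v) = .inr ((σ 0).symm v) := by
  simp [fwd]

lemma fwd2 {d : ℕ} (σ : Fin 3 → Cube d ≃ Cube d) (v : Cube d) :
    fwd σ (2, v) = .inr (σ 2 v) := by
  simp [fwd]

/-- The subgraph of `D_d ∈ Δ_d` induced on `C^(1) ∪ B^(2) ∪ A^(3)` is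
isomorphic to `C*_d`. -/
theorem induced_iso_CStar (d : ℕ) (hd : 1 ≤ d) (σ : Fin 3 → Cube d ≃ Cube d)
    (hσ : ∀ i v, Even (wt v) → ¬ Even (wt (σ i v))) :
    Nonempty (((DeltaGraph d σ).induce
      {x : VDelta d | x.1 = 0 ∨ (x.1 = 1 ∧ ¬ Even (wt x.2)) ∨
        (x.1 = 2 ∧ Even (wt x.2))}) ≃g CStar d) := by
  classical
  have even_symm : ∀ (i : Fin 3) (w : Cube d), ¬ Even (wt w) → Even (wt ((σ i).symm w)) :=
    fun i w hw => symm_even hd (σ i) (hσ i) hw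
  set s : Set (VDelta d) :=
    {x : VDelta d | x.1 = 0 ∨ (x.1 = 1 ∧ ¬ Even (wt x.2)) ∨ (x.1 = 2 ∧ Even (wt x.2))}
    with hs
  refine ⟨?_⟩
  refine
    { toFun := fun x => fwd σ x.1
      invFun := fun y =>
        Sum.elim (fun v => (⟨(0, v), Or.inl rfl⟩ : s))
          (fun x =>
            if h : Even (wt x) then (⟨(1, σ 0 x), Or.inr (Or.inl ⟨rfl, hσ 0 x h⟩)⟩ : s)
            else (⟨(2, (σ 2).symm x), Or.inr (Or.inr ⟨rfl, even_symm 2 x h⟩)⟩ : s)) y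
      left_inv := ?_
      right_inv := ?_
      map_rel_iff' := ?_ }
  · rintro ⟨⟨i, u⟩, hu⟩
    rcases hu with h | ⟨h, hodd⟩ | ⟨h, heven⟩
    · simp only at h; subst h
      simp only [fwd0, Sum.elim_inl]
    · simp only at h hodd; subst h
      simp only [fwd1, Sum.elim_inr]
      rw [dif_pos (even_symm 0 u hodd)]
      exact Subtype.ext (by simp)
    · simp only at h heven; subst h
      simp only [fwd2, Sum.elim_inr]
      rw [dif_neg (hσ 2 u heven)]
      exact Subtype.ext (by simp)
  · rintro (v | x)
    · simp only [Sum.elim_inl]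
      exact fwd0 σ v
    · simp only [Sum.elim_inr]
      by_cases h : Even (wt x)
      · rw [dif_pos h]
        simp [fwd1]
      · rw [dif_neg h]
        simp [fwd2]
  · rintro ⟨⟨i, u⟩, hu⟩ ⟨⟨j, v⟩, hv⟩
    show (CStar d).Adj (fwd σ (i, u)) (fwd σ (j, v)) ↔ (DeltaGraph d σ).Adj (i, u) (j, v)
    have delta_adj : ∀ (i j : Fin 3) (u v : Cube d),
        (DeltaGraph d σ).Adj (i, u) (j, v) ↔
          ((i = j ∧ hammingDist u v = 1) ∨ (j = i + 1 ∧ Even (wt u) ∧ σ i u = v) ∨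
            (i = j + 1 ∧ Even (wt v) ∧ σ j v = u)) := fun _ _ _ _ => Iff.rfl
    rcases hu with hi | ⟨hi, hu'⟩ | ⟨hi, hu'⟩ <;>
      rcases hv with hj | ⟨hj, hv'⟩ | ⟨hj, hv'⟩ <;>
      simp only at hi hj <;> subst hi <;> subst hj <;>
      rw [delta_adj]
    · -- (0,u) (0,v)
      rw [fwd0, fwd0]
      constructor
      · intro h
        exact Or.inl ⟨rfl, h⟩
      · rintro (⟨-, h⟩ | ⟨h, -⟩ | ⟨h, -⟩)
        · exact h
        · exact absurd h (by decide)
        · exact absurd h (by decide)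
    · -- (0,u) (1,v)
      rw [fwd0, fwd1]
      constructor
      · intro h
        have h' : u = (σ 0).symm v := h
        subst h'
        exact Or.inr (Or.inl ⟨by decide, even_symm 0 v hv', (σ 0).apply_symm_apply v⟩)
      · rintro (⟨h, -⟩ | ⟨-, -, h⟩ | ⟨h, -⟩)
        · exact absurd h (by decide)
        · show u = (σ 0).symm v
          rw [← h, Equiv.symm_apply_apply]
        · exact absurd h (by decide)
    · -- (0,u) (2,v)
      rw [fwd0, fwd2]
      constructor
      · intro h
        have h' : u = σ 2 v := h
        exact Or.inr (Or.inr ⟨by decide, hv', h'.symm⟩)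
      · rintro (⟨h, -⟩ | ⟨h, -⟩ | ⟨-, -, h⟩)
        · exact absurd h (by decide)
        · exact absurd h (by decide)
        · exact h.symm
    · -- (1,u) (0,v)
      rw [fwd1, fwd0]
      constructor
      · intro h
        have h' : (σ 0).symm u = v := h
        subst h'
        exact Or.inr (Or.inr ⟨by decide, even_symm 0 u hu', (σ 0).apply_symm_apply u⟩)
      · rintro (⟨h, -⟩ | ⟨h, -⟩ | ⟨-, -, h⟩)
        · exact absurd h (by decide)
        · exact absurd h (by decide)
        · show (σ 0).symm u = v
          rw [← h, Equiv.symm_apply_apply]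
    · -- (1,u) (1,v)
      rw [fwd1, fwd1]
      constructor
      · rintro ⟨⟩
      · rintro (⟨-, h⟩ | ⟨h, -⟩ | ⟨h, -⟩)
        · exact hu' ((parity_flip h).mpr hv')
        · exact absurd h (by decide)
        · exact absurd h (by decide)
    · -- (1,u) (2,v)
      rw [fwd1, fwd2]
      constructor
      · rintro ⟨⟩
      · rintro (⟨h, -⟩ | ⟨-, h, -⟩ | ⟨h, -⟩)
        · exact absurd h (by decide)
        · exact hu' h
        · exact absurd h (by decide)
    · -- (2,u) (0,v)
      rw [fwd2, fwd0]
      constructor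
      · intro h
        have h' : σ 2 u = v := h
        exact Or.inr (Or.inl ⟨by decide, hu', h'⟩)
      · rintro (⟨h, -⟩ | ⟨-, -, h⟩ | ⟨h, -⟩)
        · exact absurd h (by decide)
        · exact h
        · exact absurd h (by decide)
    · -- (2,u) (1,v)
      rw [fwd2, fwd1]
      constructor
      · rintro ⟨⟩
      · rintro (⟨h, -⟩ | ⟨h, -⟩ | ⟨-, h, -⟩)
        · exact absurd h (by decide)
        · exact absurd h (by decide)
        · exact hv' h
    · -- (2,u) (2,v)
      rw [fwd2, fwd2]
      constructor
      · rintro ⟨⟩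
      · rintro (⟨-, h⟩ | ⟨h, -⟩ | ⟨h, -⟩)
        · exact ((parity_flip h).mp hu') hv'
        · exact absurd h (by decide)
        · exact absurd h (by decide)
end
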